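/- Let F be a linearly ordered field. For A, B ∈ Mₙ(F), the following are equivalent: (1) for every C ∈ Mₙ(F) there exists r ∈ ℕ with (CA)ᵀ(CA) ≤ r·(CB)ᵀ(CB) (Loewner order); (2) there exists a bounded α ∈ F (|α| ≤ r for some r ∈ ℕ) with A = α·B. -/

import Mathlib

/-!
Testing (1) with the matrix `C` all of whose rows equal `u` shows that `uᵀ B v = 0` forces
`uᵀ A v = 0`. A bilinear form vanishing wherever another one `ψ` does is a scalar multiple of `ψ`,
so `A = α • B`; taking `C = 1` then gives `α² ≤ r`, hence `|α| ≤ r`. Conversely `|α| ≤ r` yields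
`(CA)ᵀ(CA) = α² (CB)ᵀ(CB) ≤ r² (CB)ᵀ(CB)`.
-/

open Matrix

def PSD {F : Type*} [Field F] [LinearOrder F] [IsStrictOrderedRing F] {n : ℕ} (M : Matrix (Fin n) (Fin n) F) : Prop :=
  ∀ v : Fin n → F, 0 ≤ v ⬝ᵥ M.mulVec v

section BilinearMaps

variable {K M N : Type*} [Field K] [AddCommGroup M] [Module K M] [AddCommGroup N] [Module K N]

theorem LinearMap.eq_zero_of_apply_eq_zero_imp {φ ψ : M →ₗ[K] N →ₗ[K] K}
    (h : ∀ x y, ψ x y = 0 → φ x y = 0) {x₀ : M} {y₀ : N} (hψ : ψ x₀ y₀ ≠ 0)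
    (hφ : φ x₀ y₀ = 0) : φ = 0 := by
  have row : ∀ y, φ x₀ y = 0 := fun y => by
    have := h x₀ (ψ x₀ y₀ • y - ψ x₀ y • y₀) (by simp only [map_sub, map_smul, smul_eq_mul]; ring)
    simpa [hφ, hψ] using this
  have of_ne : ∀ x y, ψ x₀ y ≠ 0 → φ x y = 0 := fun x y hy => by
    have := h (ψ x₀ y • x - ψ x y • x₀) y (by
      simp only [map_sub, map_smul, LinearMap.sub_apply, LinearMap.smul_apply, smul_eq_mul]; ring)
    simpa [row, hy] using this
  ext x y
  by_cases hy : ψ x₀ y = 0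
  · have := of_ne x (y + y₀) (by simpa [hy] using hψ)
    simpa [of_ne x y₀ hψ] using this
  · exact of_ne x y hy

theorem LinearMap.exists_eq_smul_of_apply_eq_zero_imp {φ ψ : M →ₗ[K] N →ₗ[K] K}
    (h : ∀ x y, ψ x y = 0 → φ x y = 0) : ∃ α : K, φ = α • ψ := by
  by_cases hψ : ψ = 0
  · exact ⟨0, by ext x y; simpa [hψ] using h x y (by simp [hψ])⟩
  obtain ⟨x₀, y₀, hx₀y₀⟩ : ∃ x y, ψ x y ≠ 0 := by
    by_contra! H
    exact hψ (by ext x y; exact H x y)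
  refine ⟨φ x₀ y₀ / ψ x₀ y₀, sub_eq_zero.mp ?_⟩
  refine LinearMap.eq_zero_of_apply_eq_zero_imp (fun x y hxy => ?_) hx₀y₀ ?_
  · simp [hxy, h x y hxy]
  · simp [hx₀y₀]

end BilinearMaps

theorem Matrix.exists_eq_smul_of_dotProduct_mulVec_eq_zero_imp {K ι κ : Type*} [Field K]
    [Fintype ι] [Fintype κ] [DecidableEq ι] [DecidableEq κ] {A B : Matrix ι κ K}
    (h : ∀ u v, u ⬝ᵥ B *ᵥ v = 0 → u ⬝ᵥ A *ᵥ v = 0) : ∃ α : K, A = α • B := by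
  obtain ⟨α, hα⟩ := LinearMap.exists_eq_smul_of_apply_eq_zero_imp
    (φ := toLinearMap₂' K A) (ψ := toLinearMap₂' K B) (by simpa only [toLinearMap₂'_apply'] using h)
  exact ⟨α, toLinearMap₂' K |>.injective (by rw [hα, map_smul])⟩

theorem Matrix.dotProduct_transpose_mul_self_mulVec {R m n : Type*} [CommSemiring R] [Fintype m]
    [Fintype n] (M : Matrix m n R) (v : n → R) : v ⬝ᵥ (Mᵀ * M) *ᵥ v = M *ᵥ v ⬝ᵥ M *ᵥ v := by
  rw [← mulVec_mulVec, dotProduct_mulVec, vecMul_transpose]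

theorem Matrix.smul_dotProduct_smul_self {R n : Type*} [CommSemiring R] [Fintype n] (a : R)
    (w : n → R) : a • w ⬝ᵥ a • w = a ^ 2 * (w ⬝ᵥ w) := by
  rw [smul_dotProduct, dotProduct_smul, smul_eq_mul, smul_eq_mul, ← mul_assoc, sq]

theorem Matrix.dotProduct_self_nonneg {R n : Type*} [CommRing R] [LinearOrder R]
    [IsStrictOrderedRing R] [Fintype n] (w : n → R) : 0 ≤ w ⬝ᵥ w :=
  Fintype.sum_nonneg fun _ => mul_self_nonneg _

theorem abs_le_natCast_of_sq_le {F : Type*} [Field F] [LinearOrder F] [IsStrictOrderedRing F]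
    {α : F} {r : ℕ} (h : α ^ 2 ≤ r) : |α| ≤ r :=
  abs_le_of_sq_le_sq (h.trans (by exact_mod_cast Nat.le_self_pow two_ne_zero r)) r.cast_nonneg

section Loewner

variable {F : Type*} [Field F] [LinearOrder F] [IsStrictOrderedRing F] {n : ℕ}

theorem psd_smul_transpose_mul_self_sub_iff (r : F) (D E : Matrix (Fin n) (Fin n) F) :
    PSD (r • (Dᵀ * D) - Eᵀ * E) ↔ ∀ v, E *ᵥ v ⬝ᵥ E *ᵥ v ≤ r * (D *ᵥ v ⬝ᵥ D *ᵥ v) := by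
  refine forall_congr' fun v => ?_
  rw [sub_mulVec, dotProduct_sub, smul_mulVec, dotProduct_smul, smul_eq_mul,
    dotProduct_transpose_mul_self_mulVec, dotProduct_transpose_mul_self_mulVec, sub_nonneg]

theorem mulVec_eq_zero_of_psd_smul_transpose_mul_self_sub {r : F} {D E : Matrix (Fin n) (Fin n) F}
    (h : PSD (r • (Dᵀ * D) - Eᵀ * E)) {v : Fin n → F} (hv : D *ᵥ v = 0) : E *ᵥ v = 0 := by
  have hle := (psd_smul_transpose_mul_self_sub_iff r D E).mp h v
  rw [hv, dotProduct_zero, mul_zero] at hle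
  exact dotProduct_self_eq_zero.mp (le_antisymm hle (dotProduct_self_nonneg _))

theorem dotProduct_mulVec_eq_zero_imp_of_psd {A B : Matrix (Fin n) (Fin n) F}
    (h : ∀ C : Matrix (Fin n) (Fin n) F,
      ∃ r : ℕ, PSD ((r : F) • ((C * B)ᵀ * (C * B)) - (C * A)ᵀ * (C * A)))
    (u v : Fin n → F) (huv : u ⬝ᵥ B *ᵥ v = 0) : u ⬝ᵥ A *ᵥ v = 0 := by
  obtain ⟨r, hr⟩ := h (replicateRow (Fin n) u)
  have hA := mulVec_eq_zero_of_psd_smul_transpose_mul_self_sub hr (v := v)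
    (by rw [← mulVec_mulVec, replicateRow_mulVec_eq_const, huv]; rfl)
  rw [← mulVec_mulVec, replicateRow_mulVec_eq_const] at hA
  rcases isEmpty_or_nonempty (Fin n) with hn | ⟨⟨i⟩⟩
  · simp [dotProduct]
  · exact congrFun hA i

theorem sq_le_of_psd_smul_transpose_mul_self_sub_smul {r α : F} {B : Matrix (Fin n) (Fin n) F}
    (h : PSD (r • (Bᵀ * B) - (α • B)ᵀ * (α • B))) (hB : B ≠ 0) : α ^ 2 ≤ r := by
  obtain ⟨v, hv⟩ : ∃ v, B *ᵥ v ≠ 0 := by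
    by_contra! H
    exact hB (ext_iff_mulVec.mpr fun v => by simpa using H v)
  have hle := (psd_smul_transpose_mul_self_sub_iff r B (α • B)).mp h v
  rw [smul_mulVec, smul_dotProduct_smul_self] at hle
  exact le_of_mul_le_mul_right hle
    ((dotProduct_self_nonneg _).lt_of_ne' (dotProduct_self_eq_zero.not.mpr hv))

end Loewner

theorem stmt_18 (F : Type*) [Field F] [LinearOrder F] [IsStrictOrderedRing F] (n : ℕ)
    (A B : Matrix (Fin n) (Fin n) F) :
    (∀ C : Matrix (Fin n) (Fin n) F,
        ∃ r : ℕ, PSD ((r : F) • ((C * B)ᵀ * (C * B)) - (C * A)ᵀ * (C * A))) ↔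
      ∃ α : F, (∃ r : ℕ, |α| ≤ (r : F)) ∧ A = α • B := by
  constructor
  · intro h
    obtain ⟨α, rfl⟩ :=
      exists_eq_smul_of_dotProduct_mulVec_eq_zero_imp (dotProduct_mulVec_eq_zero_imp_of_psd h)
    by_cases hB : B = 0
    · exact ⟨0, ⟨0, by simp⟩, by simp [hB]⟩
    obtain ⟨r, hr⟩ := h 1
    rw [one_mul, one_mul] at hr
    exact ⟨α, ⟨r, abs_le_natCast_of_sq_le
      (sq_le_of_psd_smul_transpose_mul_self_sub_smul hr hB)⟩, rfl⟩
  · rintro ⟨α, ⟨r, hα⟩, rfl⟩ C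
    refine ⟨r ^ 2, (psd_smul_transpose_mul_self_sub_iff _ _ _).mpr fun v => ?_⟩
    rw [Matrix.mul_smul, smul_mulVec, smul_dotProduct_smul_self, Nat.cast_pow]
    have hα2 : α ^ 2 ≤ (r : F) ^ 2 := sq_le_sq' (neg_le_of_abs_le hα) (le_of_abs_le hα)
    exact mul_le_mul_of_nonneg_right hα2 (dotProduct_self_nonneg _)
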